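/- arXiv:1612.09436 — 3 statements merged into one kernel-verified Lean document; each statement's English description precedes it below -/
import Mathlib

section
/- The two circular permutations (a,b,c,d) and (a,c,b,d) of the vertex set {a,b,c,d} of the complete graph K₄ together separate every pair of non-adjacent edges of K₄; consequently π°(K₄) ≤ 2. -/
/-- Strict cyclic betweenness on `Fin n`: `b` lies strictly between `a` and `c`
going clockwise from `a` to `c`. -/
def cycBtw {n : ℕ} (a b c : Fin n) : Prop :=
  (a < b ∧ b < c) ∨ (b < c ∧ c < a) ∨ (c < a ∧ a < b)

/-- The pair of non-adjacent edges `uv` and `xy` is separated in the circular ordering `σ`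
(the ordering places vertex `w` at circular position `σ w`): the endpoints `x` and `y` lie
in the same arc determined by `u` and `v`, i.e. the endpoints do not alternate. -/
def cSeparates {V : Type*} {n : ℕ} (σ : V ≃ Fin n) (u v x y : V) : Prop :=
  cycBtw (σ u) (σ x) (σ v) ↔ cycBtw (σ u) (σ y) (σ v)

/-- The chords `uv` and `xy` cross (their endpoints alternate) in the circular ordering `σ`. -/
def cCrosses {V : Type*} {n : ℕ} (σ : V ≃ Fin n) (u v x y : V) : Prop :=
  (cycBtw (σ u) (σ x) (σ v) ∧ cycBtw (σ v) (σ y) (σ u)) ∨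
  (cycBtw (σ u) (σ y) (σ v) ∧ cycBtw (σ v) (σ x) (σ u))

/-- A family of circular orderings is pairwise suitable for `G`: every pair of
non-adjacent edges is separated in at least one ordering of the family. -/
def IsCircSepFamily {V : Type*} {n k : ℕ} (G : SimpleGraph V) (F : Fin k → (V ≃ Fin n)) : Prop :=
  ∀ u v x y : V, G.Adj u v → G.Adj x y → u ≠ x → u ≠ y → v ≠ x → v ≠ y →
    ∃ i, cSeparates (F i) u v x y

/-- The circular separation dimension `π°(G)`: the minimum number of circular orderings of the
vertex set such that every pair of non-adjacent edges is separated in at least one of them. -/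
noncomputable def circSepDim {V : Type*} [Fintype V] (G : SimpleGraph V) : ℕ :=
  sInf {k | ∃ F : Fin k → (V ≃ Fin (Fintype.card V)), IsCircSepFamily G F}

theorem circSepDim_le_of_isCircSepFamily {V : Type*} [Fintype V] (G : SimpleGraph V) {k : ℕ}
    {F : Fin k → (V ≃ Fin (Fintype.card V))} (hF : IsCircSepFamily G F) : circSepDim G ≤ k :=
  Nat.sInf_le ⟨F, hF⟩

/-- The three pairs of non-adjacent edges of `K₄` are its perfect matchings. In `(a,b,c,d)` the
matchings `{ab, cd}` and `{ad, bc}` consist of sides of the square and are separated; the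
remaining one, `{ac, bd}`, consists of its diagonals, which become sides in `(a,c,b,d)`. -/
theorem isCircSepFamily_completeGraph_fin_four :
    IsCircSepFamily (SimpleGraph.completeGraph (Fin 4))
      ![Equiv.refl (Fin 4), Equiv.swap (1 : Fin 4) (2 : Fin 4)] := by
  simp only [IsCircSepFamily, cSeparates, cycBtw, SimpleGraph.completeGraph_eq_top,
    SimpleGraph.top_adj]
  decide

/-- The vertices `a, b, c, d` are `0, 1, 2, 3`, so `(a,c,b,d)` is the ordering `Equiv.swap 1 2`. -/
theorem k4_two_circular_orderings :
    IsCircSepFamily (SimpleGraph.completeGraph (Fin 4))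
      ![Equiv.refl (Fin 4), Equiv.swap (1 : Fin 4) (2 : Fin 4)] ∧
    circSepDim (SimpleGraph.completeGraph (Fin 4)) ≤ 2 :=
  ⟨isCircSepFamily_completeGraph_fin_four,
    circSepDim_le_of_isCircSepFamily _ isCircSepFamily_completeGraph_fin_four⟩
end

section
/- If G is a series-parallel graph, then π°(G) ≤ 2. -/
/-- `SPReduces s t E` means the multigraph with edge multiset `E` can be reduced to the
single edge `st` (a `K₂` with terminals `s` and `t`) by a sequence of parallel reductions
(replacing two parallel edges by one) and series reductions (replacing the two edges at a
degree-2 vertex other than the terminals by a single edge). -/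
inductive SPReduces {V : Type*} (s t : V) : Multiset (Sym2 V) → Prop
  | base : SPReduces s t {s(s, t)}
  | parallel (E : Multiset (Sym2 V)) (e : Sym2 V) :
      SPReduces s t (e ::ₘ E) → SPReduces s t (e ::ₘ e ::ₘ E)
  | series (E : Multiset (Sym2 V)) (a v b : V) (hvs : v ≠ s) (hvt : v ≠ t)
      (hva : v ≠ a) (hvb : v ≠ b) (hdeg : ∀ e ∈ E, v ∉ e) :
      SPReduces s t (s(a, b) ::ₘ E) → SPReduces s t (s(a, v) ::ₘ s(v, b) ::ₘ E)

section helpers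
variable {n : ℕ}

variable {n : ℕ}

def rotFn (m p : Fin n) : Fin n :=
  ⟨if m.1 ≤ p.1 then p.1 - m.1 else p.1 + n - m.1, by
    have h1 := p.isLt; have h2 := m.isLt; split_ifs <;> omega⟩

lemma rotFn_val (m p : Fin n) :
    (rotFn m p).1 = if m.1 ≤ p.1 then p.1 - m.1 else p.1 + n - m.1 := rfl

lemma rotFn_inj (m : Fin n) : Function.Injective (rotFn m) := by
  intro p q h
  have h1 := p.isLt; have h2 := q.isLt; have h3 := m.isLt
  have hv := congrArg Fin.val h
  simp only [rotFn_val] at hv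
  apply Fin.ext
  split_ifs at hv <;> omega

lemma rotFn_btw (m p q r : Fin n) :
    cycBtw (rotFn m p) (rotFn m q) (rotFn m r) ↔ cycBtw p q r := by
  have h1 := p.isLt; have h2 := q.isLt; have h3 := r.isLt; have h4 := m.isLt
  simp only [cycBtw, Fin.lt_def, rotFn_val]
  split_ifs <;> omega

lemma rotFn_pos {m p : Fin n} (h : p ≠ m) : 0 < (rotFn m p).1 := by
  have h1 := p.isLt; have h2 := m.isLt
  have hv : p.1 ≠ m.1 := fun hh => h (Fin.ext hh)
  rw [rotFn_val]; split_ifs <;> omega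

def shiftFn (k p : Fin n) : Fin n :=
  if p.1 = k.1 then ⟨1 % n, Nat.mod_lt 1 p.pos⟩
  else if h : 0 < p.1 ∧ p.1 < k.1 then ⟨p.1 + 1, by have := k.isLt; omega⟩ else p

lemma shiftFn_val (k p : Fin n) : (shiftFn k p).1 =
    if p.1 = k.1 then 1 % n else if 0 < p.1 ∧ p.1 < k.1 then p.1 + 1 else p.1 := by
  unfold shiftFn; split_ifs <;> rfl

lemma shiftFn_inj {k : Fin n} (hk : 0 < k.1) : Function.Injective (shiftFn k) := by
  have hn := k.isLt
  have h1 : 1 % n = 1 := Nat.mod_eq_of_lt (by omega)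
  intro p q h
  have hv := congrArg Fin.val h
  rw [shiftFn_val, shiftFn_val, h1] at hv
  apply Fin.ext
  split_ifs at hv <;> omega

lemma shiftFn_btw {k p q r : Fin n} (hk : 0 < k.1)
    (hp : p.1 ≠ k.1) (hq : q.1 ≠ k.1) (hr : r.1 ≠ k.1) :
    cycBtw (shiftFn k p) (shiftFn k q) (shiftFn k r) ↔ cycBtw p q r := by
  have hn := k.isLt
  have h1 : 1 % n = 1 := Nat.mod_eq_of_lt (by omega)
  have e1 := p.isLt; have e2 := q.isLt; have e3 := r.isLt
  simp only [cycBtw, Fin.lt_def, shiftFn_val, h1]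
  split_ifs <;> omega


variable {V : Type*}


/-- Reorder `σ` so that `a` sits at position `0`, `v` at position `1`, and all
other vertices keep their cyclic order. -/
noncomputable def adjust (σ : V ≃ Fin n) (a v : V) (hav : v ≠ a) : V ≃ Fin n :=
  σ.trans <| (Equiv.ofBijective _ (Finite.injective_iff_bijective.mp (rotFn_inj (σ a)))).trans
    (Equiv.ofBijective _ (Finite.injective_iff_bijective.mp
      (shiftFn_inj (rotFn_pos (fun h => hav (σ.injective h))))))

lemma adjust_apply (σ : V ≃ Fin n) (a v : V) (hav : v ≠ a) (x : V) :
    adjust σ a v hav x = shiftFn (rotFn (σ a) (σ v)) (rotFn (σ a) (σ x)) := rfl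

lemma adjust_a_val (σ : V ≃ Fin n) (a v : V) (hav : v ≠ a) :
    (adjust σ a v hav a).1 = 0 := by
  have hk := rotFn_pos (m := σ a) (p := σ v) (fun h => hav (σ.injective h))
  rw [adjust_apply, shiftFn_val]
  have h0 : (rotFn (σ a) (σ a)).1 = 0 := by rw [rotFn_val]; simp
  rw [h0]
  split_ifs <;> omega

lemma adjust_v_val (σ : V ≃ Fin n) (a v : V) (hav : v ≠ a) :
    (adjust σ a v hav v).1 = 1 := by
  have hk := rotFn_pos (m := σ a) (p := σ v) (fun h => hav (σ.injective h))
  have hn := (rotFn (σ a) (σ v)).isLt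
  rw [adjust_apply, shiftFn_val]
  rw [if_pos rfl]
  exact Nat.mod_eq_of_lt (by omega)

lemma adjust_btw (σ : V ≃ Fin n) (a v : V) (hav : v ≠ a) {x y z : V}
    (hx : x ≠ v) (hy : y ≠ v) (hz : z ≠ v) :
    cycBtw (adjust σ a v hav x) (adjust σ a v hav y) (adjust σ a v hav z) ↔
      cycBtw (σ x) (σ y) (σ z) := by
  have hk := rotFn_pos (m := σ a) (p := σ v) (fun h => hav (σ.injective h))
  have aux : ∀ w : V, w ≠ v → (rotFn (σ a) (σ w)).1 ≠ (rotFn (σ a) (σ v)).1 := by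
    intro w hw h
    exact hw (σ.injective (rotFn_inj _ (Fin.ext h)))
  rw [adjust_apply, adjust_apply, adjust_apply,
    shiftFn_btw hk (aux x hx) (aux y hy) (aux z hz), rotFn_btw]

lemma adjust_sep_old (σ : V ≃ Fin n) (a v : V) (hav : v ≠ a) {p q x y : V}
    (hp : p ≠ v) (hq : q ≠ v) (hx : x ≠ v) (hy : y ≠ v) :
    cSeparates (adjust σ a v hav) p q x y ↔ cSeparates σ p q x y := by
  unfold cSeparates
  rw [adjust_btw σ a v hav hp hx hq, adjust_btw σ a v hav hp hy hq]

lemma adjust_sep_new (σ : V ≃ Fin n) (a v : V) (hav : v ≠ a) {x y : V}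
    (hx1 : x ≠ a) (hx2 : x ≠ v) (hy1 : y ≠ a) (hy2 : y ≠ v) :
    cSeparates (adjust σ a v hav) a v x y ∧ cSeparates (adjust σ a v hav) v a x y ∧
    cSeparates (adjust σ a v hav) x y a v ∧ cSeparates (adjust σ a v hav) x y v a := by
  set σ' := adjust σ a v hav with hσ'
  have ha : (σ' a).1 = 0 := adjust_a_val σ a v hav
  have hv : (σ' v).1 = 1 := adjust_v_val σ a v hav
  have hX : (σ' x).1 ≠ 0 ∧ (σ' x).1 ≠ 1 := by
    constructor
    · intro h; exact hx1 (σ'.injective (Fin.ext (by omega)))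
    · intro h; exact hx2 (σ'.injective (Fin.ext (by omega)))
  have hY : (σ' y).1 ≠ 0 ∧ (σ' y).1 ≠ 1 := by
    constructor
    · intro h; exact hy1 (σ'.injective (Fin.ext (by omega)))
    · intro h; exact hy2 (σ'.injective (Fin.ext (by omega)))
  obtain ⟨hX0, hX1⟩ := hX; obtain ⟨hY0, hY1⟩ := hY
  refine ⟨?_, ?_, ?_, ?_⟩ <;>
    · unfold cSeparates cycBtw
      simp only [Fin.lt_def]
      omega


end helpers

lemma spKey {V : Type*} [Fintype V] [DecidableEq V] {s t : V} {E : Multiset (Sym2 V)}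
    (h : SPReduces s t E) :
    ∃ σ₁ σ₂ : V ≃ Fin (Fintype.card V),
      ∀ p q x y : V, s(p, q) ∈ E → s(x, y) ∈ E → p ≠ x → p ≠ y → q ≠ x → q ≠ y →
        cSeparates σ₁ p q x y ∨ cSeparates σ₂ p q x y := by
  induction h with
  | base =>
    refine ⟨Fintype.equivFin V, Fintype.equivFin V, ?_⟩
    intro p q x y hpq hxy h1 h2 h3 h4
    rw [Multiset.mem_singleton] at hpq hxy
    rw [Sym2.eq_iff] at hpq hxy
    rcases hpq with ⟨rfl, rfl⟩ | ⟨rfl, rfl⟩ <;> rcases hxy with ⟨rfl, rfl⟩ | ⟨rfl, rfl⟩ <;>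
      simp_all
  | parallel E e _ ih =>
    obtain ⟨σ₁, σ₂, H⟩ := ih
    refine ⟨σ₁, σ₂, ?_⟩
    intro p q x y hpq hxy h1 h2 h3 h4
    rw [Multiset.mem_cons, Multiset.mem_cons] at hpq hxy
    exact H p q x y (Multiset.mem_cons.mpr (hpq.elim Or.inl (·.elim Or.inl Or.inr)))
      (Multiset.mem_cons.mpr (hxy.elim Or.inl (·.elim Or.inl Or.inr))) h1 h2 h3 h4
  | series E a v b hvs hvt hva hvb hdeg _ ih =>
    obtain ⟨σ₁, σ₂, H⟩ := ih
    refine ⟨adjust σ₁ a v hva, adjust σ₂ b v hvb, ?_⟩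
    intro p q x y hpq hxy h1 h2 h3 h4
    -- vertices of edges in E avoid v
    have hEv : ∀ {c d : V}, s(c, d) ∈ E → c ≠ v ∧ d ≠ v := by
      intro c d hcd
      have := hdeg _ hcd
      rw [Sym2.mem_iff] at this
      push_neg at this
      exact ⟨fun h => this.1 h.symm, fun h => this.2 h.symm⟩
    rw [Multiset.mem_cons, Multiset.mem_cons] at hpq hxy
    rcases hpq with hpq | hpq | hpq
    · -- {p,q} = {a,v}
      rcases hxy with hxy | hxy | hxy
      · rw [Sym2.eq_iff] at hpq hxy
        rcases hpq with ⟨rfl, rfl⟩ | ⟨rfl, rfl⟩ <;> rcases hxy with ⟨rfl, rfl⟩ | ⟨rfl, rfl⟩ <;>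
          simp_all
      · rw [Sym2.eq_iff] at hpq hxy
        rcases hpq with ⟨rfl, rfl⟩ | ⟨rfl, rfl⟩ <;> rcases hxy with ⟨rfl, rfl⟩ | ⟨rfl, rfl⟩ <;>
          simp_all
      · obtain ⟨hxv, hyv⟩ := hEv hxy
        rw [Sym2.eq_iff] at hpq
        rcases hpq with ⟨rfl, rfl⟩ | ⟨rfl, rfl⟩
        · exact Or.inl (adjust_sep_new σ₁ p q hva h1.symm hxv h2.symm hyv).1
        · exact Or.inl (adjust_sep_new σ₁ q p hva h3.symm hxv h4.symm hyv).2.1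
    · -- {p,q} = {v,b}
      rcases hxy with hxy | hxy | hxy
      · rw [Sym2.eq_iff] at hpq hxy
        rcases hpq with ⟨rfl, rfl⟩ | ⟨rfl, rfl⟩ <;> rcases hxy with ⟨rfl, rfl⟩ | ⟨rfl, rfl⟩ <;>
          simp_all
      · rw [Sym2.eq_iff] at hpq hxy
        rcases hpq with ⟨rfl, rfl⟩ | ⟨rfl, rfl⟩ <;> rcases hxy with ⟨rfl, rfl⟩ | ⟨rfl, rfl⟩ <;>
          simp_all
      · obtain ⟨hxv, hyv⟩ := hEv hxy
        rw [Sym2.eq_iff] at hpq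
        rcases hpq with ⟨rfl, rfl⟩ | ⟨rfl, rfl⟩
        · exact Or.inr (adjust_sep_new σ₂ q p hvb h3.symm hxv h4.symm hyv).2.1
        · exact Or.inr (adjust_sep_new σ₂ p q hvb h1.symm hxv h2.symm hyv).1
    · obtain ⟨hpv, hqv⟩ := hEv hpq
      rcases hxy with hxy | hxy | hxy
      · rw [Sym2.eq_iff] at hxy
        rcases hxy with ⟨rfl, rfl⟩ | ⟨rfl, rfl⟩
        · exact Or.inl (adjust_sep_new σ₁ x y hva h1 h2 h3 h4).2.2.1
        · exact Or.inl (adjust_sep_new σ₁ y x hva h2 h1 h4 h3).2.2.2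
      · rw [Sym2.eq_iff] at hxy
        rcases hxy with ⟨rfl, rfl⟩ | ⟨rfl, rfl⟩
        · exact Or.inr (adjust_sep_new σ₂ y x hvb h2 h1 h4 h3).2.2.2
        · exact Or.inr (adjust_sep_new σ₂ x y hvb h1 h2 h3 h4).2.2.1
      · obtain ⟨hxv, hyv⟩ := hEv hxy
        rcases H p q x y (Multiset.mem_cons_of_mem hpq) (Multiset.mem_cons_of_mem hxy)
          h1 h2 h3 h4 with hs | hs
        · exact Or.inl ((adjust_sep_old σ₁ a v hva hpv hqv hxv hyv).mpr hs)
        · exact Or.inr ((adjust_sep_old σ₂ b v hvb hpv hqv hxv hyv).mpr hs)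


/-- If `G` is a series-parallel graph, then `π°(G) ≤ 2`. -/
theorem circSepDim_seriesParallel {V : Type*} [Fintype V] [DecidableEq V]
    (G : SimpleGraph V) [DecidableRel G.Adj]
    (h : ∃ s t : V, SPReduces s t G.edgeFinset.val) :
    circSepDim G ≤ 2 := by
  obtain ⟨s, t, hsp⟩ := h
  obtain ⟨σ₁, σ₂, H⟩ := spKey hsp
  apply Nat.sInf_le
  refine ⟨![σ₁, σ₂], ?_⟩
  intro u v x y huv hxy h1 h2 h3 h4
  have m1 : s(u, v) ∈ G.edgeFinset.val := by
    rw [Finset.mem_val, SimpleGraph.mem_edgeFinset, SimpleGraph.mem_edgeSet]; exact huv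
  have m2 : s(x, y) ∈ G.edgeFinset.val := by
    rw [Finset.mem_val, SimpleGraph.mem_edgeFinset, SimpleGraph.mem_edgeSet]; exact hxy
  rcases H u v x y m1 m2 h1 h2 h3 h4 with hs | hs
  · exact ⟨0, hs⟩
  · exact ⟨1, hs⟩
end

section
/- Every biconnected outerplanar graph on at least 3 vertices is Hamiltonian; indeed, the boundary of the outer face forms a Hamiltonian cycle. -/
/-- `G` is outerplanar, encoded combinatorially: some circular placement of its vertices
(with edges drawn as chords) has no two disjoint edges crossing. -/
def IsOuterplanarOrdering {V : Type*} {n : ℕ} (G : SimpleGraph V) (σ : V ≃ Fin n) : Prop :=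
  ∀ u v x y : V, G.Adj u v → G.Adj x y → u ≠ x → u ≠ y → v ≠ x → v ≠ y →
    ¬ cCrosses σ u v x y

/-! Place the vertices at positions `0, …, n - 1` of a non-crossing circular order. If a chord
`uv` spans the consecutive pair `a, a + 1`, then so does a strictly shorter chord, unless `uv` is
that pair: delete `u` (or `v`) and use that the rest of the graph is connected to find an edge
leaving the positions in `(u, a]` (or in `[a + 1, v)`); since it cannot cross `uv`, it is such a
shorter chord. Connectivity gives a chord over every consecutive pair, so
consecutive vertices are adjacent; the pair `n - 1, 0` becomes consecutive after rotating the
order. Hence the circular order is a spanning copy of the cycle graph. -/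

theorem Fin.val_eq_add_one_mod_of_val_sub_eq_one {n : ℕ} {a b : Fin n}
    (h : (a - b : Fin n).val = 1) : (a : ℕ) = ((b : ℕ) + 1) % n := by
  rcases le_or_gt b a with hba | hab
  · rw [Fin.sub_val_of_le hba] at h
    rw [Nat.mod_eq_of_lt (by omega)]
    omega
  · rw [Fin.coe_sub_iff_lt.2 hab] at h
    rw [show (b : ℕ) + 1 = n by omega, Nat.mod_self]
    omega

namespace SimpleGraph

variable {V : Type*} {G : SimpleGraph V}

theorem Preconnected.exists_adj_mem_notMem (hG : G.Preconnected) {S : Set V} {x y : V}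
    (hx : x ∈ S) (hy : y ∉ S) : ∃ a b, a ∈ S ∧ b ∉ S ∧ G.Adj a b := by
  obtain ⟨p⟩ := hG x y
  obtain ⟨d, -, hd₁, hd₂⟩ := p.exists_boundary_dart S hx hy
  exact ⟨d.fst, d.snd, hd₁, hd₂, d.adj⟩

theorem exists_adj_mem_notMem_of_preconnected_induce_ne {w : V}
    (hw : (G.induce {u | u ≠ w}).Preconnected) {S : Set V} {x y : V}
    (hx : x ∈ S) (hxw : x ≠ w) (hy : y ∉ S) (hyw : y ≠ w) :
    ∃ a b, a ∈ S ∧ a ≠ w ∧ b ∉ S ∧ b ≠ w ∧ G.Adj a b := by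
  obtain ⟨a, b, ha, hb, hab⟩ := hw.exists_adj_mem_notMem
    (S := {z | (z : V) ∈ S}) (x := ⟨x, hxw⟩) (y := ⟨y, hyw⟩) hx hy
  exact ⟨a, b, ha, a.2, hb, b.2, hab⟩

theorem isHamiltonian_of_cycleGraph_isContained [Fintype V] [DecidableEq V]
    (h3 : 3 ≤ Fintype.card V) (h : cycleGraph (Fintype.card V) ⊑ G) : G.IsHamiltonian := by
  intro _
  obtain ⟨v, p, hp, hlen⟩ := (cycleGraph_isContained_iff h3).1 h
  exact ⟨v, p, Walk.isHamiltonianCycle_iff_isCycle_and_length_eq.2 ⟨hp, hlen⟩⟩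

theorem cycleGraph_isContained_of_adj_of_val_eq_add_one_mod {n : ℕ} (σ : V ≃ Fin n)
    (h : ∀ u v, (σ v : ℕ) = ((σ u : ℕ) + 1) % n → G.Adj u v) : cycleGraph n ⊑ G := by
  refine ⟨⟨⟨σ.symm, fun {a b} hab => ?_⟩, σ.symm.injective⟩⟩
  rcases cycleGraph_adj'.1 hab with hab | hab
  · exact (h _ _ (by simpa using Fin.val_eq_add_one_mod_of_val_sub_eq_one hab)).symm
  · exact h _ _ (by simpa using Fin.val_eq_add_one_mod_of_val_sub_eq_one hab)

end SimpleGraph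

theorem cycBtw_finRotate {n : ℕ} (a b c : Fin n) :
    cycBtw (finRotate n a) (finRotate n b) (finRotate n c) ↔ cycBtw a b c := by
  cases n with
  | zero => exact a.elim0
  | succ m =>
    simp only [cycBtw, Fin.lt_def, coe_finRotate, Fin.ext_iff, Fin.val_last]
    split_ifs <;> omega

namespace IsOuterplanarOrdering

variable {V : Type*} {n : ℕ} {G : SimpleGraph V} {σ : V ≃ Fin n}

theorem trans_finRotate (hσ : IsOuterplanarOrdering G σ) :
    IsOuterplanarOrdering G (σ.trans (finRotate n)) := by
  intro u v x y huv hxy hux huy hvx hvy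
  simpa only [cCrosses, Equiv.trans_apply, cycBtw_finRotate] using
    hσ u v x y huv hxy hux huy hvx hvy

theorem mem_Icc_of_adj_of_mem_Ioo (hσ : IsOuterplanarOrdering G σ) {u v x y : V}
    (huv : G.Adj u v) (hxy : G.Adj x y) (hx : σ x ∈ Set.Ioo (σ u) (σ v)) :
    σ y ∈ Set.Icc (σ u) (σ v) := by
  obtain ⟨hux, hxv⟩ := hx
  by_contra hy
  rw [Set.mem_Icc, not_and_or, not_le, not_le] at hy
  refine hσ u v x y huv hxy ?_ ?_ ?_ ?_ ?_ <;>
    first | (rintro rfl; omega) | (simp only [cCrosses, cycBtw]; omega)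

variable (hσ : IsOuterplanarOrdering G σ) (hcut : ∀ w, (G.induce {u | u ≠ w}).Preconnected)
include hσ hcut

theorem adj_of_val_eq_add_one_of_le_of_le {u v a b : V} (huv : G.Adj u v) (hua : σ u ≤ σ a)
    (hab : (σ b : ℕ) = σ a + 1) (hbv : σ b ≤ σ v) : G.Adj a b := by
  induction hk : (σ v : ℕ) - σ u using Nat.strong_induction_on generalizing u v with
  | _ k ih =>
  subst hk
  rcases hua.lt_or_eq with hua | hua
  · obtain ⟨x, y, hx, -, hy, hyu, hxy⟩ :=
      SimpleGraph.exists_adj_mem_notMem_of_preconnected_induce_ne (hcut u)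
        (S := {z | σ u < σ z ∧ σ z ≤ σ a}) ⟨hua, le_rfl⟩
        (fun h => hua.ne (congrArg σ h).symm)
        (fun h : σ u < σ v ∧ σ v ≤ σ a => by omega) huv.ne'
    simp only [Set.mem_ofPred_eq, not_and, not_le] at hx hy
    obtain ⟨huy, hyv⟩ := hσ.mem_Icc_of_adj_of_mem_Ioo huv hxy ⟨hx.1, by omega⟩
    have hσyu := σ.injective.ne hyu
    exact ih _ (by omega) hxy hx.2 (by omega) rfl
  · obtain rfl := σ.injective hua
    rcases hbv.lt_or_eq with hbv | hbv
    · obtain ⟨x, y, hx, -, hy, hy_ne, hxy⟩ :=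
        SimpleGraph.exists_adj_mem_notMem_of_preconnected_induce_ne (hcut v)
          (S := {z | σ b ≤ σ z ∧ σ z < σ v}) ⟨le_rfl, hbv⟩
          (fun h => hbv.ne (congrArg σ h))
          (fun h : σ b ≤ σ u ∧ σ u < σ v => by omega) huv.ne
      simp only [Set.mem_ofPred_eq, not_and, not_lt] at hx hy
      obtain ⟨huy, hyv⟩ := hσ.mem_Icc_of_adj_of_mem_Ioo huv hxy ⟨by omega, hx.2⟩
      have hσyv := σ.injective.ne hy_ne
      exact ih _ (by omega) hxy.symm (by omega) hx.1 rfl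
    · obtain rfl := σ.injective hbv
      exact huv

theorem adj_of_val_eq_add_one (hconn : G.Preconnected) {a b : V} (hab : (σ b : ℕ) = σ a + 1) :
    G.Adj a b := by
  obtain ⟨x, y, hx, hy, hxy⟩ :=
    hconn.exists_adj_mem_notMem (S := {z | σ z ≤ σ a}) (x := a) (le_refl (σ a))
      (fun h : σ b ≤ σ a => by omega)
  simp only [Set.mem_ofPred_eq, not_le] at hx hy
  exact hσ.adj_of_val_eq_add_one_of_le_of_le hcut hxy hx hab (by omega)

theorem adj_of_val_eq_add_one_mod (hconn : G.Preconnected) (hn : 2 ≤ n) {u v : V}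
    (h : (σ v : ℕ) = ((σ u : ℕ) + 1) % n) : G.Adj u v := by
  by_cases hu : (σ u : ℕ) + 1 < n
  · exact hσ.adj_of_val_eq_add_one hcut hconn (by rwa [Nat.mod_eq_of_lt hu] at h)
  · obtain ⟨m, rfl⟩ : ∃ m, n = m + 1 := ⟨n - 1, by omega⟩
    rw [show (σ u : ℕ) + 1 = m + 1 by omega, Nat.mod_self] at h
    refine hσ.trans_finRotate.adj_of_val_eq_add_one hcut hconn ?_
    simp only [Equiv.trans_apply, coe_finRotate, Fin.ext_iff, Fin.val_last]
    split_ifs <;> omega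

end IsOuterplanarOrdering

/-- Every biconnected outerplanar graph on at least `3` vertices is Hamiltonian; indeed the
boundary of the outer face (a non-crossing circular placement in which cyclically
consecutive vertices are adjacent) forms a Hamiltonian cycle. -/
theorem biconnected_outerplanar_hamiltonian {V : Type*} [Fintype V] [DecidableEq V]
    (G : SimpleGraph V) (hcard : 3 ≤ Fintype.card V) (hconn : G.Connected)
    (hcut : ∀ v : V, (G.induce {u | u ≠ v}).Connected)
    (houter : ∃ σ : V ≃ Fin (Fintype.card V), IsOuterplanarOrdering G σ) :
    G.IsHamiltonian ∧ ∃ σ : V ≃ Fin (Fintype.card V), IsOuterplanarOrdering G σ ∧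
      ∀ u v : V, ((σ v : ℕ) = ((σ u : ℕ) + 1) % Fintype.card V) → G.Adj u v := by
  obtain ⟨σ, hσ⟩ := houter
  have hcycle : ∀ u v : V, (σ v : ℕ) = ((σ u : ℕ) + 1) % Fintype.card V → G.Adj u v :=
    fun _ _ => hσ.adj_of_val_eq_add_one_mod (fun w => (hcut w).preconnected) hconn.preconnected
      (by omega)
  exact ⟨G.isHamiltonian_of_cycleGraph_isContained hcard
    (G.cycleGraph_isContained_of_adj_of_val_eq_add_one_mod σ hcycle), σ, hσ, hcycle⟩
end
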